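/- For integers n ≥ 2 and n₁ + n₂ = n with closed convex cones C₁ ⊆ ℝ^{n₁}, C₂ ⊆ ℝ^{n₂}, the spherical intrinsic volumes of the product cone satisfy the convolution identity V_j(C₁ × C₂) = Σ_{i=0}^{j} V_i(C₁) · V_{j−i}(C₂) for 0 ≤ j ≤ n, in the case where C₁ and C₂ are polyhedral. -/

import Mathlib

open MeasureTheory Module Finset

/-- The standard Gaussian measure on a Euclidean space. -/
noncomputable def stdGaussian (ι : Type*) [Fintype ι] : Measure (EuclideanSpace ℝ ι) :=
  Measure.map (MeasurableEquiv.toLp 2 (ι → ℝ))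
    (Measure.pi fun _ : ι => ProbabilityTheory.gaussianReal 0 1)

/-- The event that the metric projection of `g` onto `C` lies in the relative interior of
a `j`-dimensional face of `C`.  (Faces are extreme subsets; the dimension of a face is
the rank of its `vectorSpan`; the metric projection of `g` is the point of `C` nearest
to `g`.) -/
def faceEvent {ι : Type*} [Fintype ι] (C : Set (EuclideanSpace ℝ ι)) (j : ℕ) :
    Set (EuclideanSpace ℝ ι) :=
  {g | ∃ p F, IsExtreme ℝ C F ∧ finrank ℝ (vectorSpan ℝ F) = j ∧
      p ∈ intrinsicInterior ℝ F ∧ ∀ y ∈ C, dist g p ≤ dist g y}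

/-- The `j`-th intrinsic volume of a polyhedral cone `C`:
`V_j(C) = P[Π_C(g) ∈ relint F, F a j-dimensional face]` for `g` standard Gaussian. -/
noncomputable def polyV {ι : Type*} [Fintype ι] (j : ℕ) (C : Set (EuclideanSpace ℝ ι)) : ℝ :=
  (stdGaussian ι (faceEvent C j)).toReal

/-- A polyhedral cone: a finite intersection of closed linear halfspaces. -/
def IsPolyhedralCone {ι : Type*} [Fintype ι] (C : Set (EuclideanSpace ℝ ι)) : Prop :=
  ∃ s : Finset (EuclideanSpace ℝ ι), C = {x | ∀ v ∈ s, (inner ℝ v x : ℝ) ≤ 0}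


/-!
For `C = {x | ∀ v ∈ s, ⟪v, x⟫ ≤ 0}`, the face of `C` whose relative interior contains a point
`p ∈ C` is cut out by the constraints active at `p`; so `g` lies in the `j`-th face event exactly
when this face, taken at the metric projection of `g`, has dimension `j`. For the product cone the
constraints, the metric projection, the active face and its dimension all split along the two
blocks of coordinates, so the face dimension at `g` is the sum of the face dimensions at the two
blocks of `g`. Under the standard Gaussian the two blocks are independent, hence the intrinsic
volumes convolve.
-/

open Filter Topology EuclideanSpace
open scoped RealInnerProductSpace

section OpenSegment

variable {E : Type*} [AddCommGroup E] [Module ℝ E]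

theorem mem_openSegment_smul_sub_add {p q : E} {δ : ℝ} (hδ : 0 < δ) :
    p ∈ openSegment ℝ q (δ • (p - q) + p) := by
  have h : (1 : ℝ) + δ ≠ 0 := by positivity
  refine ⟨δ / (1 + δ), 1 / (1 + δ), by positivity, by positivity, by field_simp; ring, ?_⟩
  match_scalars <;> field_simp <;> ring

theorem IsExtreme.mem_of_eventually_smul_sub_add_mem {A B : Set E} {p q : E}
    (hAB : IsExtreme ℝ A B) (hp : p ∈ B) (hq : q ∈ A)
    (h : ∀ᶠ δ in 𝓝 (0 : ℝ), δ • (p - q) + p ∈ A) : q ∈ B := by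
  have h' : ∀ᶠ δ in 𝓝[>] (0 : ℝ), δ • (p - q) + p ∈ A := h.filter_mono nhdsWithin_le_nhds
  obtain ⟨δ, hδA, hδ⟩ := (h'.and self_mem_nhdsWithin).exists
  exact hAB.left_mem_of_mem_openSegment hq hδA hp (mem_openSegment_smul_sub_add hδ)

end OpenSegment

section IntrinsicInterior

variable {E : Type*} [NormedAddCommGroup E] [NormedSpace ℝ E]

theorem mem_intrinsicInterior_of_isOpen {S U : Set E} {p : E} (hU : IsOpen U) (hpU : p ∈ U)
    (hpS : p ∈ S) (hUS : U ∩ affineSpan ℝ S ⊆ S) : p ∈ intrinsicInterior ℝ S :=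
  mem_intrinsicInterior.2 ⟨⟨p, subset_affineSpan ℝ S hpS⟩,
    mem_interior.2 ⟨((↑) : affineSpan ℝ S → E) ⁻¹' U, fun x hx => hUS ⟨hx, x.2⟩,
      hU.preimage continuous_subtype_val, hpU⟩, rfl⟩

theorem eventually_smul_sub_add_mem_of_mem_intrinsicInterior {S : Set E} {p q : E}
    (hp : p ∈ intrinsicInterior ℝ S) (hq : q ∈ affineSpan ℝ S) :
    ∀ᶠ δ in 𝓝 (0 : ℝ), δ • (p - q) + p ∈ S := by
  obtain ⟨y, hy, rfl⟩ := mem_intrinsicInterior.1 hp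
  let path : ℝ → affineSpan ℝ S := fun δ =>
    ⟨δ • ((y : E) - q) + y, AffineSubspace.smul_vsub_vadd_mem _ δ y.2 hq y.2⟩
  have hpath : Continuous path := by fun_prop
  have hpath0 : path 0 = y := by ext; simp [path]
  exact hpath.continuousAt.preimage_mem_nhds (hpath0 ▸ mem_interior_iff_mem_nhds.1 hy)

end IntrinsicInterior

section PolyhedralCone

variable {E : Type*} [NormedAddCommGroup E] [InnerProductSpace ℝ E]

def polyCone (s : Finset E) : Set E :=
  {x | ∀ v ∈ s, ⟪v, x⟫ ≤ 0}

def minFace (s : Finset E) (p : E) : Set E :=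
  {x ∈ polyCone s | ∀ v ∈ s, ⟪v, p⟫ = 0 → ⟪v, x⟫ = 0}

theorem zero_mem_polyCone (s : Finset E) : (0 : E) ∈ polyCone s :=
  fun v _ => (inner_zero_right v).le

theorem isClosed_polyCone (s : Finset E) : IsClosed (polyCone s) := by
  simp only [polyCone, Set.ofPred_forall]
  exact isClosed_biInter fun v _ => isClosed_le (by fun_prop) continuous_const

theorem convex_polyCone (s : Finset E) : Convex ℝ (polyCone s) := by
  simp only [polyCone, Set.ofPred_forall]
  exact convex_iInter₂ fun v _ => convex_halfSpace_le (innerₛₗ ℝ v).isLinear 0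

theorem zero_mem_minFace (s : Finset E) (p : E) : (0 : E) ∈ minFace s p :=
  ⟨zero_mem_polyCone s, fun v _ _ => inner_zero_right v⟩

theorem self_mem_minFace {s : Finset E} {p : E} (hp : p ∈ polyCone s) : p ∈ minFace s p :=
  ⟨hp, fun _ _ h => h⟩

theorem isExtreme_minFace (s : Finset E) (p : E) : IsExtreme ℝ (polyCone s) (minFace s p) := by
  refine ⟨fun x hx => hx.1, ?_⟩
  rintro x₁ hx₁ x₂ hx₂ x ⟨-, hx⟩ ⟨a, b, ha, hb, -, rfl⟩
  refine ⟨hx₁, fun v hv hvp => ?_⟩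
  have h := hx v hv hvp
  rw [inner_add_right, real_inner_smul_right, real_inner_smul_right] at h
  nlinarith [hx₁ v hv, hx₂ v hv]

theorem inner_eq_zero_of_mem_affineSpan_minFace {s : Finset E} {p v x : E} (hv : v ∈ s)
    (hvp : ⟪v, p⟫ = 0) (hx : x ∈ affineSpan ℝ (minFace s p)) : ⟪v, x⟫ = 0 := by
  have hle : affineSpan ℝ (minFace s p) ≤ (LinearMap.ker (innerₛₗ ℝ v)).toAffineSubspace :=
    affineSpan_le.2 fun y hy => by simpa using hy.2 v hv hvp
  simpa using hle hx

theorem mem_intrinsicInterior_minFace {s : Finset E} {p : E} (hp : p ∈ polyCone s) :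
    p ∈ intrinsicInterior ℝ (minFace s p) := by
  classical
  refine mem_intrinsicInterior_of_isOpen
    (U := ⋂ v ∈ s.filter (fun v => ⟪v, p⟫ ≠ 0), {x | ⟪v, x⟫ < 0})
    (isOpen_biInter_finset fun v _ => isOpen_lt (by fun_prop) continuous_const) ?_
    (self_mem_minFace hp) ?_
  · simp only [Set.mem_iInter, Finset.mem_filter]
    exact fun v ⟨hv, hvp⟩ => (hp v hv).lt_of_ne hvp
  · rintro x ⟨hxU, hxA⟩
    have hzero v (hv : v ∈ s) (hvp : ⟪v, p⟫ = 0) : ⟪v, x⟫ = 0 :=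
      inner_eq_zero_of_mem_affineSpan_minFace hv hvp hxA
    refine ⟨fun v hv => ?_, hzero⟩
    by_cases hvp : ⟪v, p⟫ = 0
    · exact (hzero v hv hvp).le
    · exact (Set.mem_iInter₂.1 hxU v (Finset.mem_filter.2 ⟨hv, hvp⟩)).le

theorem eventually_smul_sub_add_mem_polyCone {s : Finset E} {p q : E} (hp : p ∈ polyCone s)
    (hq : q ∈ minFace s p) : ∀ᶠ δ in 𝓝 (0 : ℝ), δ • (p - q) + p ∈ polyCone s := by
  refine (eventually_all_finset s).2 fun v hv => ?_
  have hinner (δ : ℝ) : ⟪v, δ • (p - q) + p⟫ = (1 + δ) * ⟪v, p⟫ - δ * ⟪v, q⟫ := by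
    simp only [inner_add_right, inner_sub_right, real_inner_smul_right]; ring
  rcases (hp v hv).lt_or_eq with hvp | hvp
  · have hcont : ContinuousAt (fun δ : ℝ => ⟪v, δ • (p - q) + p⟫) 0 := by fun_prop
    filter_upwards [hcont.eventually_lt continuousAt_const (by simpa using hvp)] with δ hδ
      using hδ.le
  · exact Eventually.of_forall fun δ => by simp [hinner, hvp, hq.2 v hv hvp]

/-- In both inclusions `q` is pushed through `p` a little beyond `p`, staying in `F` (as `p` is in
its relative interior), resp. in `polyCone s` (as only constraints inactive at `p` can break), so
that `p` lies in an open segment from `q`. -/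
theorem IsExtreme.eq_minFace {s : Finset E} {F : Set E} {p : E}
    (hF : IsExtreme ℝ (polyCone s) F) (hp : p ∈ intrinsicInterior ℝ F) : F = minFace s p := by
  have hpF : p ∈ F := intrinsicInterior_subset hp
  have hpC : p ∈ polyCone s := hF.subset hpF
  refine Set.Subset.antisymm (fun q hq => ?_) (fun q hq => ?_)
  · exact (isExtreme_minFace s p).mem_of_eventually_smul_sub_add_mem (self_mem_minFace hpC)
      (hF.subset hq) ((eventually_smul_sub_add_mem_of_mem_intrinsicInterior hp
        (subset_affineSpan ℝ F hq)).mono fun _ h => hF.subset h)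
  · exact hF.mem_of_eventually_smul_sub_add_mem hpF hq.1
      (eventually_smul_sub_add_mem_polyCone hpC hq)

end PolyhedralCone

section NearestPoint

variable {α : Type*} [PseudoMetricSpace α]

open Classical in
noncomputable def nearestPt (C : Set α) (g : α) : α :=
  if h : ∃ p ∈ C, ∀ y ∈ C, dist g p ≤ dist g y then h.choose else g

theorem nearestPt_spec {C : Set α} {g : α} (h : ∃ p ∈ C, ∀ y ∈ C, dist g p ≤ dist g y) :
    nearestPt C g ∈ C ∧ ∀ y ∈ C, dist g (nearestPt C g) ≤ dist g y := by
  rw [nearestPt, dif_pos h]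
  exact h.choose_spec

theorem IsClosed.exists_forall_dist_le [ProperSpace α] {C : Set α} (hC : IsClosed C)
    (hne : C.Nonempty) (g : α) : ∃ p ∈ C, ∀ y ∈ C, dist g p ≤ dist g y := by
  obtain ⟨p, hp, hdist⟩ := hC.exists_infDist_eq_dist hne g
  exact ⟨p, hp, fun y hy => hdist ▸ Metric.infDist_le_dist_of_mem hy⟩

variable {E : Type*} [NormedAddCommGroup E] [InnerProductSpace ℝ E]

theorem Convex.inner_sub_le_zero_of_forall_dist_le {C : Set E} (hC : Convex ℝ C) {g p : E}
    (hp : p ∈ C) (hmin : ∀ y ∈ C, dist g p ≤ dist g y) : ∀ y ∈ C, ⟪g - p, y - p⟫ ≤ 0 := by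
  have : Nonempty C := ⟨⟨p, hp⟩⟩
  refine (norm_eq_iInf_iff_real_inner_le_zero hC hp).1 (le_antisymm ?_ ?_)
  · exact le_ciInf fun y => by simpa only [dist_eq_norm] using hmin y y.2
  · exact ciInf_le ⟨0, Set.forall_mem_range.2 fun _ => norm_nonneg _⟩ (⟨p, hp⟩ : C)

theorem norm_sub_le_of_inner_sub_le_zero {g g' p q : E} (hp : ⟪g - p, q - p⟫ ≤ 0)
    (hq : ⟪g' - q, p - q⟫ ≤ 0) : ‖p - q‖ ≤ ‖g - g'‖ := by
  have hsq : ‖p - q‖ ^ 2 ≤ ‖g - g'‖ * ‖p - q‖ := by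
    have h : ⟪g - g', p - q⟫ = ‖p - q‖ ^ 2 - ⟪g - p, q - p⟫ - ⟪g' - q, p - q⟫ := by
      rw [← real_inner_self_eq_norm_sq]
      simp only [inner_sub_left, inner_sub_right, real_inner_comm]
      ring
    linarith [real_inner_le_norm (g - g') (p - q)]
  nlinarith [norm_nonneg (p - q), norm_nonneg (g - g')]

theorem nearestPt_eq {C : Set E} (hC : Convex ℝ C) {g p : E} (hp : p ∈ C)
    (hmin : ∀ y ∈ C, dist g p ≤ dist g y) : nearestPt C g = p := by
  obtain ⟨hq, hqmin⟩ := nearestPt_spec ⟨p, hp, hmin⟩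
  have h := norm_sub_le_of_inner_sub_le_zero
    (hC.inner_sub_le_zero_of_forall_dist_le hq hqmin p hp)
    (hC.inner_sub_le_zero_of_forall_dist_le hp hmin _ hq)
  simpa [sub_eq_zero] using h

theorem lipschitzWith_nearestPt [ProperSpace E] {C : Set E} (hC : IsClosed C)
    (hconv : Convex ℝ C) (hne : C.Nonempty) : LipschitzWith 1 (nearestPt C) := by
  refine LipschitzWith.of_dist_le_mul fun g g' => ?_
  obtain ⟨hp, hpmin⟩ := nearestPt_spec (hC.exists_forall_dist_le hne g)
  obtain ⟨hq, hqmin⟩ := nearestPt_spec (hC.exists_forall_dist_le hne g')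
  rw [NNReal.coe_one, one_mul, dist_eq_norm, dist_eq_norm]
  exact norm_sub_le_of_inner_sub_le_zero
    (hconv.inner_sub_le_zero_of_forall_dist_le hp hpmin _ hq)
    (hconv.inner_sub_le_zero_of_forall_dist_le hq hqmin _ hp)

end NearestPoint

section FaceDimension

variable {E : Type*} [NormedAddCommGroup E] [InnerProductSpace ℝ E]

noncomputable def faceDim (s : Finset E) (g : E) : ℕ :=
  finrank ℝ (vectorSpan ℝ (minFace s (nearestPt (polyCone s) g)))

theorem measurableSet_setOf_minFace [MeasurableSpace E] [OpensMeasurableSpace E] (s : Finset E)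
    (P : Set E → Prop) : MeasurableSet {p | P (minFace s p)} := by
  -- `minFace s p` depends on `p` only through its (finitely many) patterns of active constraints
  let pattern : E → (s → Prop) := fun p v => ⟪(v : E), p⟫ = 0
  have hpattern : Measurable pattern := measurable_pi_lambda _ fun v =>
    measurableSet_setOfPred.1 (isClosed_eq (by fun_prop) continuous_const).measurableSet
  have hset : {p | P (minFace s p)} =
      pattern ⁻¹' {π | P {x ∈ polyCone s | ∀ v : s, π v → ⟪(v : E), x⟫ = 0}} := by
    ext p
    simp [minFace, pattern]
  exact hset ▸ hpattern MeasurableSet.of_discrete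

theorem measurable_faceDim [ProperSpace E] [MeasurableSpace E] [BorelSpace E] (s : Finset E) :
    Measurable (faceDim s) :=
  measurable_to_countable' fun j =>
    (lipschitzWith_nearestPt (isClosed_polyCone s) (convex_polyCone s)
      ⟨0, zero_mem_polyCone s⟩).continuous.measurable
      (measurableSet_setOf_minFace s fun F => finrank ℝ (vectorSpan ℝ F) = j)

theorem faceEvent_polyCone {ι : Type*} [Fintype ι] (s : Finset (EuclideanSpace ℝ ι)) (j : ℕ) :
    faceEvent (polyCone s) j = faceDim s ⁻¹' {j} := by
  ext g
  constructor
  · rintro ⟨p, F, hF, rfl, hpF, hpmin⟩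
    have hp := nearestPt_eq (convex_polyCone s) (hF.subset (intrinsicInterior_subset hpF)) hpmin
    change faceDim s g = finrank ℝ (vectorSpan ℝ F)
    rw [faceDim, hp, ← hF.eq_minFace hpF]
  · intro h
    obtain ⟨hmem, hmin⟩ := nearestPt_spec
      ((isClosed_polyCone s).exists_forall_dist_le ⟨0, zero_mem_polyCone s⟩ g)
    exact ⟨_, _, isExtreme_minFace s _, h, mem_intrinsicInterior_minFace hmem, hmin⟩

end FaceDimension

section LinearAlgebra

variable {K M M₁ M₂ : Type*} [DivisionRing K] [AddCommGroup M] [Module K M]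
  [AddCommGroup M₁] [Module K M₁] [AddCommGroup M₂] [Module K M₂]

theorem vectorSpan_eq_span_of_zero_mem {s : Set M} (h : (0 : M) ∈ s) :
    vectorSpan K s = Submodule.span K s := by
  simp [vectorSpan_eq_span_vsub_set_right K h]

theorem Submodule.finrank_prod [FiniteDimensional K M₁] [FiniteDimensional K M₂]
    (p : Submodule K M₁) (q : Submodule K M₂) :
    finrank K (p.prod q) = finrank K p + finrank K q := by
  have h := LinearMap.finrank_range_of_inj (f := p.subtype.prodMap q.subtype)
    (Prod.map_injective.2 ⟨p.injective_subtype, q.injective_subtype⟩)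
  rwa [LinearMap.range_prodMap, Submodule.range_subtype, Submodule.range_subtype,
    Module.finrank_prod] at h

theorem finrank_vectorSpan_preimage_prod [FiniteDimensional K M₁] [FiniteDimensional K M₂]
    (e : M ≃ₗ[K] M₁ × M₂) {A : Set M₁} {B : Set M₂} (hA : (0 : M₁) ∈ A) (hB : (0 : M₂) ∈ B) :
    finrank K (vectorSpan K (e ⁻¹' (A ×ˢ B))) =
      finrank K (vectorSpan K A) + finrank K (vectorSpan K B) := by
  have h0 : (0 : M) ∈ e ⁻¹' (A ×ˢ B) := by simpa using ⟨hA, hB⟩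
  rw [vectorSpan_eq_span_of_zero_mem h0, vectorSpan_eq_span_of_zero_mem hA,
    vectorSpan_eq_span_of_zero_mem hB, ← e.image_symm_eq_preimage,
    Submodule.span_image_linearEquiv, LinearEquiv.finrank_map_eq, Submodule.span_prod_eq K hA hB,
    Submodule.finrank_prod]

end LinearAlgebra

section ProductCone

variable {ι₁ ι₂ : Type*} [Fintype ι₁] [Fintype ι₂]

theorem EuclideanSpace.inner_eq_inner_sumEquivProd (x y : EuclideanSpace ℝ (ι₁ ⊕ ι₂)) :
    ⟪x, y⟫ =
      ⟪(sumEquivProd x).1, (sumEquivProd y).1⟫ + ⟪(sumEquivProd x).2, (sumEquivProd y).2⟫ := by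
  simp [PiLp.inner_apply, Fintype.sum_sum_type]

theorem EuclideanSpace.dist_sq_eq_dist_sumEquivProd (x y : EuclideanSpace ℝ (ι₁ ⊕ ι₂)) :
    dist x y ^ 2 = dist (sumEquivProd x).1 (sumEquivProd y).1 ^ 2 +
      dist (sumEquivProd x).2 (sumEquivProd y).2 ^ 2 := by
  simp only [dist_eq_norm, ← real_inner_self_eq_norm_sq, inner_eq_inner_sumEquivProd, map_sub,
    Prod.fst_sub, Prod.snd_sub]

open Classical in
noncomputable def prodConstraints (s₁ : Finset (EuclideanSpace ℝ ι₁))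
    (s₂ : Finset (EuclideanSpace ℝ ι₂)) : Finset (EuclideanSpace ℝ (ι₁ ⊕ ι₂)) :=
  s₁.image (fun v => sumEquivProd.symm (v, 0)) ∪ s₂.image (fun w => sumEquivProd.symm (0, w))

variable (s₁ : Finset (EuclideanSpace ℝ ι₁)) (s₂ : Finset (EuclideanSpace ℝ ι₂))

theorem EuclideanSpace.inner_sumEquivProd_symm_inl (v : EuclideanSpace ℝ ι₁)
    (x : EuclideanSpace ℝ (ι₁ ⊕ ι₂)) :
    ⟪sumEquivProd.symm (v, 0), x⟫ = ⟪v, (sumEquivProd x).1⟫ := by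
  simp [inner_eq_inner_sumEquivProd (ι₁ := ι₁)]

theorem EuclideanSpace.inner_sumEquivProd_symm_inr (w : EuclideanSpace ℝ ι₂)
    (x : EuclideanSpace ℝ (ι₁ ⊕ ι₂)) :
    ⟪sumEquivProd.symm (0, w), x⟫ = ⟪w, (sumEquivProd x).2⟫ := by
  simp [inner_eq_inner_sumEquivProd (ι₁ := ι₁)]

theorem forall_mem_prodConstraints {P : EuclideanSpace ℝ (ι₁ ⊕ ι₂) → Prop} :
    (∀ v ∈ prodConstraints s₁ s₂, P v) ↔
      (∀ v ∈ s₁, P (sumEquivProd.symm (v, 0))) ∧ ∀ w ∈ s₂, P (sumEquivProd.symm (0, w)) := by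
  classical
  simp only [prodConstraints, Finset.forall_mem_union, Finset.forall_mem_image]

theorem polyCone_prodConstraints :
    polyCone (prodConstraints s₁ s₂) = sumEquivProd ⁻¹' (polyCone s₁ ×ˢ polyCone s₂) := by
  ext x
  simp only [polyCone, Set.mem_ofPred_eq, forall_mem_prodConstraints,
    inner_sumEquivProd_symm_inl, inner_sumEquivProd_symm_inr, Set.mem_preimage, Set.mem_prod]

theorem minFace_prodConstraints (p : EuclideanSpace ℝ (ι₁ ⊕ ι₂)) :
    minFace (prodConstraints s₁ s₂) p = sumEquivProd ⁻¹'
      (minFace s₁ (sumEquivProd p).1 ×ˢ minFace s₂ (sumEquivProd p).2) := by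
  ext x
  simp only [minFace, Set.mem_ofPred_eq, polyCone_prodConstraints, Set.mem_preimage,
    Set.mem_prod, forall_mem_prodConstraints, inner_sumEquivProd_symm_inl,
    inner_sumEquivProd_symm_inr]
  tauto

theorem nearestPt_prodConstraints (g : EuclideanSpace ℝ (ι₁ ⊕ ι₂)) :
    nearestPt (polyCone (prodConstraints s₁ s₂)) g = sumEquivProd.symm
      (nearestPt (polyCone s₁) (sumEquivProd g).1,
        nearestPt (polyCone s₂) (sumEquivProd g).2) := by
  obtain ⟨hp₁, hmin₁⟩ := nearestPt_spec
    ((isClosed_polyCone s₁).exists_forall_dist_le ⟨0, zero_mem_polyCone s₁⟩ (sumEquivProd g).1)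
  obtain ⟨hp₂, hmin₂⟩ := nearestPt_spec
    ((isClosed_polyCone s₂).exists_forall_dist_le ⟨0, zero_mem_polyCone s₂⟩ (sumEquivProd g).2)
  refine nearestPt_eq (convex_polyCone _) ?_ fun y hy => ?_
  · rw [polyCone_prodConstraints]
    simpa using ⟨hp₁, hp₂⟩
  · rw [polyCone_prodConstraints] at hy
    refine (pow_le_pow_iff_left₀ dist_nonneg dist_nonneg two_ne_zero).1 ?_
    rw [dist_sq_eq_dist_sumEquivProd, dist_sq_eq_dist_sumEquivProd,
      ContinuousLinearEquiv.apply_symm_apply]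
    gcongr
    exacts [hmin₁ _ hy.1, hmin₂ _ hy.2]

theorem faceDim_prodConstraints (g : EuclideanSpace ℝ (ι₁ ⊕ ι₂)) :
    faceDim (prodConstraints s₁ s₂) g =
      faceDim s₁ (sumEquivProd g).1 + faceDim s₂ (sumEquivProd g).2 := by
  rw [faceDim, nearestPt_prodConstraints, minFace_prodConstraints,
    ContinuousLinearEquiv.apply_symm_apply]
  have h := finrank_vectorSpan_preimage_prod (K := ℝ) (M := EuclideanSpace ℝ (ι₁ ⊕ ι₂))
    sumEquivProd.toLinearEquiv
    (zero_mem_minFace s₁ (nearestPt (polyCone s₁) (sumEquivProd g).1))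
    (zero_mem_minFace s₂ (nearestPt (polyCone s₂) (sumEquivProd g).2))
  rwa [ContinuousLinearEquiv.coe_toLinearEquiv] at h

end ProductCone

section Gaussian

theorem MeasureTheory.Measure.prod_setOf_add_eq {X Y : Type*} [MeasurableSpace X]
    [MeasurableSpace Y] (μ : Measure X) (ν : Measure Y) [SFinite ν] {f : X → ℕ} {g : Y → ℕ}
    (hf : Measurable f) (hg : Measurable g) (n : ℕ) :
    μ.prod ν {z | f z.1 + g z.2 = n} =
      ∑ ij ∈ antidiagonal n, μ (f ⁻¹' {ij.1}) * ν (g ⁻¹' {ij.2}) := by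
  have hset : {z : X × Y | f z.1 + g z.2 = n} =
      ⋃ ij ∈ antidiagonal n, (f ⁻¹' {ij.1}) ×ˢ (g ⁻¹' {ij.2}) := by
    ext z
    simp
  rw [hset, measure_biUnion_finset]
  · simp only [Measure.prod_prod]
  · intro a _ b _ hab
    refine Set.disjoint_left.2 fun z ha hb => hab ?_
    simp only [Set.mem_prod, Set.mem_preimage, Set.mem_singleton_iff] at ha hb
    exact Prod.ext (ha.1.symm.trans hb.1) (ha.2.symm.trans hb.2)
  · exact fun ij _ => (hf (measurableSet_singleton _)).prod (hg (measurableSet_singleton _))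

instance isProbabilityMeasure_stdGaussian (ι : Type*) [Fintype ι] :
    IsProbabilityMeasure (stdGaussian ι) :=
  Measure.isProbabilityMeasure_map (MeasurableEquiv.measurable _).aemeasurable

theorem measurePreserving_toLp_stdGaussian (ι : Type*) [Fintype ι] :
    MeasurePreserving (MeasurableEquiv.toLp 2 (ι → ℝ))
      (Measure.pi fun _ : ι => ProbabilityTheory.gaussianReal 0 1) (stdGaussian ι) :=
  ⟨MeasurableEquiv.measurable _, rfl⟩

variable {ι₁ ι₂ : Type*} [Fintype ι₁] [Fintype ι₂]

theorem measurePreserving_sumEquivProd_stdGaussian :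
    MeasurePreserving (sumEquivProd : EuclideanSpace ℝ (ι₁ ⊕ ι₂) → _)
      (stdGaussian (ι₁ ⊕ ι₂)) ((stdGaussian ι₁).prod (stdGaussian ι₂)) := by
  refine ⟨sumEquivProd.continuous.measurable, ?_⟩
  have h := ((measurePreserving_toLp_stdGaussian ι₁).prod
    (measurePreserving_toLp_stdGaussian ι₂)).comp
    (measurePreserving_sumPiEquivProdPi fun _ : ι₁ ⊕ ι₂ => ProbabilityTheory.gaussianReal 0 1)
  rw [stdGaussian, Measure.map_map sumEquivProd.continuous.measurable
    (MeasurableEquiv.measurable _)]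
  exact h.map_eq

theorem stdGaussian_faceDim_prodConstraints (s₁ : Finset (EuclideanSpace ℝ ι₁))
    (s₂ : Finset (EuclideanSpace ℝ ι₂)) (j : ℕ) :
    stdGaussian (ι₁ ⊕ ι₂) (faceDim (prodConstraints s₁ s₂) ⁻¹' {j}) =
      ∑ ij ∈ antidiagonal j,
        stdGaussian ι₁ (faceDim s₁ ⁻¹' {ij.1}) * stdGaussian ι₂ (faceDim s₂ ⁻¹' {ij.2}) := by
  have hset : faceDim (prodConstraints s₁ s₂) ⁻¹' {j} =
      sumEquivProd ⁻¹' {z | faceDim s₁ z.1 + faceDim s₂ z.2 = j} := by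
    ext g
    simp [faceDim_prodConstraints]
  have hmeas : MeasurableSet {z : EuclideanSpace ℝ ι₁ × EuclideanSpace ℝ ι₂ |
      faceDim s₁ z.1 + faceDim s₂ z.2 = j} :=
    (((measurable_faceDim s₁).comp measurable_fst).add
      ((measurable_faceDim s₂).comp measurable_snd)) (measurableSet_singleton j)
  rw [hset,
    measurePreserving_sumEquivProd_stdGaussian.measure_preimage hmeas.nullMeasurableSet]
  exact Measure.prod_setOf_add_eq _ _ (measurable_faceDim s₁) (measurable_faceDim s₂) j

end Gaussian

theorem intrinsic_volumes_product_general (n₁ n₂ : ℕ)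
    (C₁ : Set (EuclideanSpace ℝ (Fin n₁))) (C₂ : Set (EuclideanSpace ℝ (Fin n₂)))
    (h₁ : IsPolyhedralCone C₁) (h₂ : IsPolyhedralCone C₂)
    (j : ℕ) :
    polyV j {x : EuclideanSpace ℝ (Fin n₁ ⊕ Fin n₂) |
        (WithLp.toLp 2 (fun i => x (Sum.inl i)) : EuclideanSpace ℝ (Fin n₁)) ∈ C₁ ∧
        (WithLp.toLp 2 (fun i => x (Sum.inr i)) : EuclideanSpace ℝ (Fin n₂)) ∈ C₂} =
      ∑ i ∈ range (j + 1), polyV i C₁ * polyV (j - i) C₂ := by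
  obtain ⟨s₁, rfl : C₁ = polyCone s₁⟩ := h₁
  obtain ⟨s₂, rfl : C₂ = polyCone s₂⟩ := h₂
  change polyV j (sumEquivProd ⁻¹' (polyCone s₁ ×ˢ polyCone s₂)) = _
  simp only [polyV, ← polyCone_prodConstraints, faceEvent_polyCone,
    stdGaussian_faceDim_prodConstraints]
  rw [ENNReal.toReal_sum fun _ _ => ENNReal.mul_ne_top (measure_ne_top _ _) (measure_ne_top _ _),
    Finset.Nat.sum_antidiagonal_eq_sum_range_succ_mk]
  simp only [ENNReal.toReal_mul]

/-- For polyhedral closed convex cones `C₁ ⊆ ℝ^{n₁}`, `C₂ ⊆ ℝ^{n₂}` with `n₁ + n₂ = n ≥ 2`,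
the intrinsic volumes of the product cone satisfy the convolution identity
`V_j(C₁ × C₂) = Σ_{i=0}^j V_i(C₁) V_{j−i}(C₂)` for `0 ≤ j ≤ n`. -/
theorem intrinsic_volumes_product (n n₁ n₂ : ℕ) (hn : 2 ≤ n) (hsum : n₁ + n₂ = n)
    (C₁ : Set (EuclideanSpace ℝ (Fin n₁))) (C₂ : Set (EuclideanSpace ℝ (Fin n₂)))
    (h₁ : IsPolyhedralCone C₁) (h₂ : IsPolyhedralCone C₂)
    (h₁c : IsClosed C₁ ∧ Convex ℝ C₁ ∧ ∀ (c : ℝ), 0 < c → ∀ x ∈ C₁, c • x ∈ C₁)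
    (h₂c : IsClosed C₂ ∧ Convex ℝ C₂ ∧ ∀ (c : ℝ), 0 < c → ∀ x ∈ C₂, c • x ∈ C₂)
    (j : ℕ) (hj : j ≤ n) :
    polyV j {x : EuclideanSpace ℝ (Fin n₁ ⊕ Fin n₂) |
        (WithLp.toLp 2 (fun i => x (Sum.inl i)) : EuclideanSpace ℝ (Fin n₁)) ∈ C₁ ∧
        (WithLp.toLp 2 (fun i => x (Sum.inr i)) : EuclideanSpace ℝ (Fin n₂)) ∈ C₂} =
      ∑ i ∈ range (j + 1), polyV i C₁ * polyV (j - i) C₂ :=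
  intrinsic_volumes_product_general n₁ n₂ C₁ C₂ h₁ h₂ j
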